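/- Let X be a finite-dimensional real normed space, let K, A ⊂ X satisfy condition (H), and assume K is polyhedral, i.e. K = {x ∈ X : ⟨x, x_i*⟩ ≥ 0 for i = 1,…,m} for finitely many nonzero x_1*,…,x_m* ∈ X* with ∩_{i=1}^m ker x_i* = {0} and {x : ⟨x, x_i*⟩ > 0 for all i} ≠ ∅. Then F_A : K → ℝ₊, F_A(x) := max{t ≥ 0 : x ∈ tA} (convention 0·A := K), is continuous on K. -/

import Mathlib

/-!
`F_A` is upper semicontinuous on all of `X` as soon as `A` is closed and avoids `0`: if
`c > F_A x`, then near `x` the points with `F_A > c` lie in the projection of the closed set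
`{(t, y) : t ∈ [c, M], t⁻¹ • y ∈ A}` along the compact factor `[c, M]`, which misses `x`
(the bound `M` comes from `‖y‖ ≥ t · dist(0, A)` for `y ∈ t • A`).

Lower semicontinuity on `K` is where polyhedrality enters. If `x = s • a` with `a ∈ A` and
`0 < t < s`, then for `y ∈ K` near `x` every functional with `φ i x > 0` still satisfies
`φ i (t⁻¹ • y) > φ i (s⁻¹ • x)`, while those with `φ i x = 0` are nonnegative on `y`; hence
`t⁻¹ • y - a ∈ K` and `t⁻¹ • y ∈ A + K = A`, i.e. `F_A y ≥ t`.
-/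

open Set Filter Topology Pointwise

variable {X : Type*} [NormedAddCommGroup X] [NormedSpace ℝ X]

/-- The set `t·A`, with the convention `0·A := K`. -/
noncomputable def scaled (K A : Set X) (t : ℝ) : Set X := if t = 0 then K else t • A

/-- `F_A(x) := max {t ≥ 0 : x ∈ tA}` (with the convention `0·A := K`), realized as a
supremum; under condition (H) the set `{t ≥ 0 : x ∈ tA}` is a compact interval
containing `0`, so the supremum is a maximum. -/
noncomputable def FA (K A : Set X) (x : X) : ℝ :=
  sSup {t : ℝ | 0 ≤ t ∧ x ∈ scaled K A t}

/-- `ℙA = {t • a : t > 0, a ∈ A}`. -/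
def posScaled (A : Set X) : Set X := {x | ∃ t : ℝ, 0 < t ∧ ∃ a ∈ A, x = t • a}

theorem eventually_smul_sub_smul_mem_polyhedral {ι : Type*} [Finite ι] (φ : ι → X →L[ℝ] ℝ)
    {x : X} (hx : ∀ i, 0 ≤ φ i x) {c d : ℝ} (hc : 0 ≤ c) (hdc : d < c) :
    ∀ᶠ y in 𝓝[{z | ∀ i, 0 ≤ φ i z}] x, ∀ i, 0 ≤ φ i (c • y - d • x) := by
  have hnear : ∀ᶠ y in 𝓝 x, ∀ i, 0 < φ i x → d * φ i x < c * φ i y := by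
    refine eventually_all.2 fun i => ?_
    by_cases hi : 0 < φ i x
    · have hlt : d * φ i x < c * φ i x := mul_lt_mul_of_pos_right hdc hi
      filter_upwards [((continuous_const.mul (φ i).continuous).tendsto x).eventually
        (lt_mem_nhds hlt)] with y hy _ using hy
    · exact Eventually.of_forall fun _ h => absurd h hi
  filter_upwards [self_mem_nhdsWithin, nhdsWithin_le_nhds hnear] with y hy hnear i
  simp only [map_sub, map_smul, smul_eq_mul, sub_nonneg]
  rcases (hx i).eq_or_lt with hi | hi
  · rw [← hi, mul_zero]
    exact mul_nonneg hc (hy i)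
  · exact (hnear i hi).le

theorem exists_pos_le_norm_of_isClosed {E : Type*} [SeminormedAddCommGroup E] {A : Set E}
    (hA : IsClosed A) (h0 : (0 : E) ∉ A) :
    ∃ r > 0, ∀ a ∈ A, r ≤ ‖a‖ := by
  obtain ⟨r, hr, hball⟩ := Metric.mem_nhds_iff.1 (hA.isOpen_compl.mem_nhds h0)
  exact ⟨r, hr, fun a ha => not_lt.1 fun h => hball (mem_ball_zero_iff.2 h) ha⟩

section FA

variable {K A : Set X}

theorem mem_scaled_iff {t : ℝ} (ht : 0 < t) {y : X} : y ∈ scaled K A t ↔ t⁻¹ • y ∈ A := by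
  rw [scaled, if_neg ht.ne', mem_smul_set_iff_inv_smul_mem₀ ht.ne']

theorem FA_nonneg (x : X) : 0 ≤ FA K A x :=
  Real.sSup_nonneg fun _ ht => ht.1

theorem le_div_of_mem_scaled {r : ℝ} (hr : 0 < r) (hrA : ∀ a ∈ A, r ≤ ‖a‖) {t : ℝ} (ht : 0 < t)
    {y : X} (hy : y ∈ scaled K A t) : t ≤ ‖y‖ / r := by
  have hra := hrA _ ((mem_scaled_iff ht).1 hy)
  rw [norm_smul, norm_inv, Real.norm_of_nonneg ht.le] at hra
  rw [le_div_iff₀ hr]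
  calc t * r ≤ t * (t⁻¹ * ‖y‖) := by gcongr
    _ = ‖y‖ := by field_simp

theorem bddAbove_scaled_mem (hA : IsClosed A) (h0 : (0 : X) ∉ A) (y : X) :
    BddAbove {t : ℝ | 0 ≤ t ∧ y ∈ scaled K A t} := by
  obtain ⟨r, hr, hrA⟩ := exists_pos_le_norm_of_isClosed hA h0
  refine ⟨‖y‖ / r, fun t ⟨ht, hy⟩ => ?_⟩
  rcases ht.eq_or_lt with rfl | ht
  · positivity
  · exact le_div_of_mem_scaled hr hrA ht hy

theorem le_FA (hA : IsClosed A) (h0 : (0 : X) ∉ A) {t : ℝ} (ht : 0 ≤ t) {y : X}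
    (hy : y ∈ scaled K A t) : t ≤ FA K A y :=
  le_csSup (bddAbove_scaled_mem hA h0 y) ⟨ht, hy⟩

theorem upperSemicontinuous_FA (hA : IsClosed A) (h0 : (0 : X) ∉ A) :
    UpperSemicontinuous (FA K A) := by
  intro x c hc
  obtain ⟨r, hr, hrA⟩ := exists_pos_le_norm_of_isClosed hA h0
  set b := (FA K A x + c) / 2 with hb_def
  set M := (‖x‖ + 1) / r
  have hb : 0 < b := by linarith [FA_nonneg (K := K) (A := A) x]
  let C : Set X := Prod.snd '' {p : Icc b M × X | (p.1 : ℝ)⁻¹ • p.2 ∈ A}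
  have hC : IsClosed C := by
    have : CompactSpace (Icc b M) := isCompact_iff_compactSpace.1 isCompact_Icc
    refine isClosedMap_snd_of_compactSpace _ (hA.preimage ?_)
    exact ((continuous_subtype_val.comp continuous_fst).inv₀
      fun p => (hb.trans_le p.1.2.1).ne').smul continuous_snd
  have hxC : x ∉ C := by
    rintro ⟨⟨t, y⟩, hy, hyx : y = x⟩
    rw [hyx] at hy
    have ht : 0 < (t : ℝ) := hb.trans_le t.2.1
    linarith [le_FA (K := K) hA h0 ht.le ((mem_scaled_iff ht).2 hy), t.2.1]
  filter_upwards [hC.isOpen_compl.mem_nhds hxC, Metric.ball_mem_nhds x one_pos] with y hyC hyx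
  refine (Real.sSup_le (fun t ht => ?_) hb.le).trans_lt (by linarith)
  obtain ⟨ht, hy⟩ := ht
  rcases ht.eq_or_lt with rfl | ht
  · exact hb.le
  by_contra! hbt
  have hyM : t ≤ M := by
    have : ‖y‖ ≤ ‖x‖ + 1 := by
      linarith [norm_sub_norm_le y x, dist_eq_norm y x ▸ Metric.mem_ball.1 hyx]
    calc t ≤ ‖y‖ / r := le_div_of_mem_scaled hr hrA ht hy
      _ ≤ M := div_le_div_of_nonneg_right this hr.le
  exact hyC ⟨(⟨t, hbt.le, hyM⟩, y), (mem_scaled_iff ht).1 hy, rfl⟩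

theorem lowerSemicontinuousWithinAt_FA_of_polyhedral (hA : IsClosed A) (h0 : (0 : X) ∉ A)
    (hAK : A + K ⊆ A) {ι : Type*} [Finite ι] (φ : ι → X →L[ℝ] ℝ)
    (hK : K = {x | ∀ i, 0 ≤ φ i x}) {x : X} (hx : x ∈ K) :
    LowerSemicontinuousWithinAt (FA K A) K x := by
  intro c hc
  rcases lt_or_ge c 0 with hc0 | hc0
  · exact Eventually.of_forall fun y => hc0.trans_le (FA_nonneg y)
  have hxK : x ∈ scaled K A 0 := by rwa [scaled, if_pos rfl]
  obtain ⟨s, ⟨-, hxs⟩, hcs⟩ := exists_lt_of_lt_csSup (s := {t | 0 ≤ t ∧ x ∈ scaled K A t})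
    ⟨0, le_rfl, hxK⟩ hc
  set t := (c + s) / 2 with ht_def
  have ht : 0 < t := by linarith
  have hts : t < s := by linarith
  have hxA := (mem_scaled_iff (ht.trans hts)).1 hxs
  rw [hK] at hx ⊢
  filter_upwards [eventually_smul_sub_smul_mem_polyhedral φ hx (inv_nonneg.2 ht.le)
    (inv_strictAnti₀ ht hts)] with y hy
  have hyA : t⁻¹ • y ∈ A := by
    have := hAK (add_mem_add hxA (hK ▸ hy : t⁻¹ • y - s⁻¹ • x ∈ K))
    rwa [add_sub_cancel] at this
  exact (by linarith : c < t).trans_le (le_FA hA h0 ht.le ((mem_scaled_iff ht).2 hyA))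

end FA

theorem stmt16_general
    (K A : Set X)
    (hAclosed : IsClosed A)
    (hAK : A + K = A) (hAsub : A ⊆ K \ {0})
    (m : ℕ) (φ : Fin m → (X →L[ℝ] ℝ))
    (hK : K = {x : X | ∀ i, 0 ≤ φ i x}) :
    ContinuousOn (FA K A) K := by
  have h0 : (0 : X) ∉ A := fun h => (hAsub h).2 rfl
  intro x hx
  rw [continuousWithinAt_iff_lower_upperSemicontinuousWithinAt]
  exact ⟨lowerSemicontinuousWithinAt_FA_of_polyhedral hAclosed h0 hAK.subset φ hK hx,
    (upperSemicontinuous_FA hAclosed h0).upperSemicontinuousWithinAt K x⟩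

/-- Let `K, A` satisfy condition (H) in a finite-dimensional real normed
space and assume `K` is polyhedral:
`K = {x : ⟨x, x_i*⟩ ≥ 0, i = 1,…,m}` with nonzero functionals `x_i*` whose kernels have
trivial intersection and with `{x : ⟨x, x_i*⟩ > 0 ∀ i} ≠ ∅`. Then `F_A` is continuous
on `K`. -/
theorem stmt16 [FiniteDimensional ℝ X] [Nontrivial X]
    (hdim : 2 ≤ Module.finrank ℝ X)
    (K A : Set X)
    (hKconv : Convex ℝ K) (hKclosed : IsClosed K)
    (hKcone : ∀ t : ℝ, 0 ≤ t → ∀ x ∈ K, t • x ∈ K)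
    (hKpointed : K ∩ (-K) = {0}) (hKint : (interior K).Nonempty)
    (hAne : A.Nonempty) (hAclosed : IsClosed A)
    (hAK : A + K = A) (hAsub : A ⊆ K \ {0})
    (m : ℕ) (φ : Fin m → (X →L[ℝ] ℝ))
    (hφne : ∀ i, φ i ≠ 0)
    (hK : K = {x : X | ∀ i, 0 ≤ φ i x})
    (hker : ∀ x : X, (∀ i, φ i x = 0) → x = 0)
    (hpos : {x : X | ∀ i, 0 < φ i x}.Nonempty) :
    ContinuousOn (FA K A) K :=
  stmt16_general K A hAclosed hAK hAsub m φ hK
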